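/- Let μ1, μ2 ∈ ℂ with μ1 ∉ ℤ, (μ1+μ2)/2 ∉ ℤ and (μ1−μ2)/2 ∉ ℤ, and let k2, k3, k4 ≥ 0 be integers. Then both series ∑_{k1=0}^∞ ((−1)^{k1}/k1!) · Γ(μ1−k1) · Γ((−μ1−μ2)/2 + k1 + k2 − k3) · Γ((−μ1+μ2)/2 + k1 − k2 − k4) and ∑_{k1=0}^∞ ((−1)^{k1}/k1!) · Γ(−μ1−k1) · Γ((μ1−μ2)/2 + k1 + k2 − k3) · Γ((μ1+μ2)/2 + k1 − k2 − k4) converge absolutely, and their sum vanishes: ∑_{k1=0}^∞ ((−1)^{k1}/k1!) · [ Γ(μ1−k1)·Γ((−μ1−μ2)/2+k1+k2−k3)·Γ((−μ1+μ2)/2+k1−k2−k4) + Γ(−μ1−k1)·Γ((μ1−μ2)/2+k1+k2−k3)·Γ((μ1+μ2)/2+k1−k2−k4) ] = 0. -/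

import Mathlib

noncomputable section

/-- The `k1`-th term of the residue series (Ca1). -/
def termCa1 (μ1 μ2 : ℂ) (k2 k3 k4 k1 : ℕ) : ℂ :=
  ((-1 : ℂ) ^ k1 / (Nat.factorial k1 : ℂ)) *
    Complex.Gamma (μ1 - (k1 : ℂ)) *
    Complex.Gamma ((-μ1 - μ2) / 2 + (k1 : ℂ) + (k2 : ℂ) - (k3 : ℂ)) *
    Complex.Gamma ((-μ1 + μ2) / 2 + (k1 : ℂ) - (k2 : ℂ) - (k4 : ℂ))

/-- The `k1`-th term of the residue series (Ca2). -/
def termCa2 (μ1 μ2 : ℂ) (k2 k3 k4 k1 : ℕ) : ℂ :=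
  ((-1 : ℂ) ^ k1 / (Nat.factorial k1 : ℂ)) *
    Complex.Gamma (-μ1 - (k1 : ℂ)) *
    Complex.Gamma ((μ1 - μ2) / 2 + (k1 : ℂ) + (k2 : ℂ) - (k3 : ℂ)) *
    Complex.Gamma ((μ1 + μ2) / 2 + (k1 : ℂ) - (k2 : ℂ) - (k4 : ℂ))

/-!
Writing `Γ(z - k) = (-1)^k Γ(z) / (1 - z)_k` and `Γ(a + k) = Γ(a) (a)_k`, a series
`∑ (-1)^k / k! · Γ(z - k) Γ(a + k) Γ(b + k)` with `a + b + z + N = 0` is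
`Γ(z) Γ(a) Γ(b) · ₂F₁(a, b; 1 - z; 1)`, whose parameters have integer excess
`(1 - z) - a - b = N + 1`. Gauss's summation at integer excess evaluates it to
`N! Γ(z) Γ(1 - z) / ((a)_{N+1} (b)_{N+1})`; for `N = 0` the partial sums telescope, and induction
on `N` uses the contiguous relation `F(a + 1, b; c) - F(a, b; c) = (b / c) F(a + 1, b + 1; c + 1)`.
The series (Ca2) is the series (Ca1) under `z ↦ -z, a ↦ -b - N, b ↦ -a - N`, with `N = k3 + k4`.
This substitution leaves `(a)_{N+1} (b)_{N+1}` unchanged, while by the reflection formula it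
turns `Γ(z) Γ(1 - z) = π / sin (π z)` into its negative.
Absolute convergence comes from Euler's limit `Γ(s) = lim n^s n! / (s)_{n+1}`, which makes the
`k`-th hypergeometric coefficient of size `k^(-(N + 2))`.
-/

open Complex Filter Topology Polynomial Asymptotics
open scoped Nat

lemma ascPochhammer_eval_eq_prod_range {R : Type*} [CommSemiring R] (n : ℕ) (z : R) :
    (ascPochhammer R n).eval z = ∏ j ∈ Finset.range n, (z + j) := by
  induction n with
  | zero => simp
  | succ n ih => rw [ascPochhammer_succ_eval, ih, Finset.prod_range_succ]

lemma ascPochhammer_succ_eval_left {R : Type*} [CommSemiring R] (n : ℕ) (z : R) :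
    (ascPochhammer R (n + 1)).eval z = z * (ascPochhammer R n).eval (z + 1) := by
  simp only [ascPochhammer_eval_eq_prod_range, Finset.prod_range_succ', Nat.cast_add,
    Nat.cast_one, Nat.cast_zero, add_zero, add_assoc, add_comm (1 : R), mul_comm z]

lemma ascPochhammer_eval_sub_natCast {R : Type*} [CommRing R] (n : ℕ) (z : R) :
    (ascPochhammer R n).eval (z - n) = (-1) ^ n * (ascPochhammer R n).eval (1 - z) := by
  have h := ascPochhammer_eval_neg_eq_descPochhammer R ((n : R) - z) n
  rwa [neg_sub, descPochhammer_eval_eq_ascPochhammer, sub_sub_cancel_left, neg_add_eq_sub] at h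

lemma ascPochhammer_eval_neg_sub_natCast {R : Type*} [CommRing R] (N : ℕ) (a : R) :
    (ascPochhammer R (N + 1)).eval (-a - N) =
      (-1) ^ (N + 1) * (ascPochhammer R (N + 1)).eval a := by
  rw [show -a - N = 1 - a - ((N + 1 : ℕ) : R) by push_cast; ring, ascPochhammer_eval_sub_natCast,
    sub_sub_cancel]

lemma ascPochhammer_eval_ne_zero {R : Type*} [CommRing R] [IsDomain R] {z : R}
    (hz : ∀ m : ℕ, z ≠ -m) (n : ℕ) : (ascPochhammer R n).eval z ≠ 0 := by
  rw [Ne, ascPochhammer_eval_eq_zero_iff]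
  rintro ⟨k, -, hk⟩
  exact hz k (by rw [hk, neg_neg])

lemma ne_neg_natCast_of_eq_add_natCast {R : Type*} [CommRing R] {z w : R} (hz : ∀ m : ℕ, z ≠ -m)
    (k : ℕ) (hw : w = z + k) (m : ℕ) : w ≠ -m :=
  fun h ↦ hz (m + k) (by push_cast; linear_combination h - hw)

namespace Complex

lemma Gamma_add_natCast {z : ℂ} (hz : ∀ m : ℕ, z ≠ -m) (n : ℕ) :
    Gamma (z + n) = Gamma z * (ascPochhammer ℂ n).eval z := by
  rw [← Gamma_add_nat_div_Gamma_eq z hz, mul_div_cancel₀ _ (Gamma_ne_zero hz)]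

lemma Gamma_eq_Gamma_sub_natCast_mul {z : ℂ} {n : ℕ} (hz : ∀ m : ℕ, z - n ≠ -m) :
    Gamma z = (-1) ^ n * (ascPochhammer ℂ n).eval (1 - z) * Gamma (z - n) := by
  rw [mul_comm, ← ascPochhammer_eval_sub_natCast, ← Gamma_add_natCast hz, sub_add_cancel]

lemma GammaSeq_eq_div_ascPochhammer (z : ℂ) (n : ℕ) :
    GammaSeq z n = (n : ℂ) ^ z * n ! / (ascPochhammer ℂ (n + 1)).eval z := by
  rw [GammaSeq, ascPochhammer_eval_eq_prod_range]

lemma Gamma_mul_Gamma_one_sub_add_Gamma_neg_mul_Gamma_one_add (z : ℂ) :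
    Gamma z * Gamma (1 - z) + Gamma (-z) * Gamma (1 + z) = 0 := by
  have h := Gamma_mul_Gamma_one_sub (-z)
  rw [sub_neg_eq_add, mul_neg, Complex.sin_neg, div_neg] at h
  rw [Gamma_mul_Gamma_one_sub, h, add_neg_cancel]

end Complex

section ordinaryHypergeometricCoefficient

variable {a b c : ℂ}

lemma ordinaryHypergeometricCoefficient_succ_eq (ha : ∀ m : ℕ, a ≠ -m)
    (hb : ∀ m : ℕ, b ≠ -m) (hc : ∀ m : ℕ, c ≠ -m) {n : ℕ} (hn : n ≠ 0) :
    ordinaryHypergeometricCoefficient a b c (n + 1) =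
      (n : ℂ) ^ (a + b - c) / (n + 1) * (GammaSeq c n / (GammaSeq a n * GammaSeq b n)) := by
  have hn' : (n : ℂ) ≠ 0 := Nat.cast_ne_zero.2 hn
  have hpow (z : ℂ) : (n : ℂ) ^ z ≠ 0 := cpow_ne_zero_iff.2 (Or.inl hn')
  simp only [ordinaryHypergeometricCoefficient, GammaSeq_eq_div_ascPochhammer, cpow_sub _ _ hn',
    cpow_add _ _ hn', Nat.factorial_succ, Nat.cast_mul, Nat.cast_add_one]
  field_simp [ascPochhammer_eval_ne_zero ha, ascPochhammer_eval_ne_zero hb,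
    ascPochhammer_eval_ne_zero hc, hpow, Nat.cast_add_one_ne_zero n]

lemma summable_norm_ordinaryHypergeometricCoefficient (ha : ∀ m : ℕ, a ≠ -m)
    (hb : ∀ m : ℕ, b ≠ -m) (hc : ∀ m : ℕ, c ≠ -m) (hre : 0 < (c - a - b).re) :
    Summable fun n ↦ ‖ordinaryHypergeometricCoefficient a b c n‖ := by
  set s := (c - a - b).re
  have hpow : (fun n : ℕ ↦ (n : ℂ) ^ (a + b - c) / (n + 1)) =O[atTop]
      fun n : ℕ ↦ (n : ℝ) ^ (-1 - s) := by
    refine IsBigO.of_bound 1 ?_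
    filter_upwards [eventually_gt_atTop 0] with n hn
    have hn' : (0 : ℝ) < n := Nat.cast_pos.2 hn
    have hre' : (a + b - c).re = -s := by simp only [s, sub_re, add_re]; ring
    rw [norm_div, norm_natCast_cpow_of_pos hn, hre', one_mul, Real.norm_of_nonneg (by positivity),
      show ‖(n : ℂ) + 1‖ = n + 1 by norm_cast, show -1 - s = -s + -1 by ring,
      Real.rpow_add hn', Real.rpow_neg_one, ← div_eq_mul_inv]
    gcongr
    linarith
  have hratio := ((GammaSeq_tendsto_Gamma c).div ((GammaSeq_tendsto_Gamma a).mul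
    (GammaSeq_tendsto_Gamma b)) (mul_ne_zero (Gamma_ne_zero ha) (Gamma_ne_zero hb))).isBigO_one ℝ
  have hsucc := (hpow.mul hratio).congr' (EventuallyEq.symm <| by
      filter_upwards [eventually_ne_atTop 0] with n hn
      exact ordinaryHypergeometricCoefficient_succ_eq ha hb hc hn)
    (Eventually.of_forall fun n ↦ mul_one _)
  rw [← summable_nat_add_iff 1]
  exact summable_of_isBigO_nat (Real.summable_nat_rpow.2 (by linarith)) hsucc.norm_left

lemma tendsto_natCast_mul_ordinaryHypergeometricCoefficient (ha : ∀ m : ℕ, a ≠ -m)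
    (hb : ∀ m : ℕ, b ≠ -m) (hab : ∀ m : ℕ, a + b ≠ -m) :
    Tendsto (fun n : ℕ ↦ (n : ℂ) * ordinaryHypergeometricCoefficient a b (a + b) n) atTop
      (𝓝 (Gamma (a + b) / (Gamma a * Gamma b))) := by
  rw [← tendsto_add_atTop_iff_nat 1]
  refine ((GammaSeq_tendsto_Gamma _).div ((GammaSeq_tendsto_Gamma a).mul
    (GammaSeq_tendsto_Gamma b)) (mul_ne_zero (Gamma_ne_zero ha) (Gamma_ne_zero hb))).congr' ?_
  filter_upwards [eventually_ne_atTop 0] with n hn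
  rw [ordinaryHypergeometricCoefficient_succ_eq ha hb hab hn, sub_self, cpow_zero, Nat.cast_add_one]
  field_simp [Nat.cast_add_one_ne_zero n]
  rfl

lemma sum_range_ordinaryHypergeometricCoefficient_add_one (ha : a ≠ 0) (hb : b ≠ 0)
    (hab : ∀ m : ℕ, a + b ≠ -m) (n : ℕ) :
    ∑ k ∈ Finset.range n, ordinaryHypergeometricCoefficient a b (a + b + 1) k =
      (a + b) / (a * b) * (n * ordinaryHypergeometricCoefficient a b (a + b) n) := by
  induction n with
  | zero => simp
  | succ n ih =>
    have hab0 : a + b ≠ 0 := by simpa using hab 0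
    have habn : a + b + n ≠ 0 := by simpa using ne_neg_natCast_of_eq_add_natCast hab n rfl 0
    have hshift : (ascPochhammer ℂ n).eval (a + b + 1) =
        (ascPochhammer ℂ n).eval (a + b) * (a + b + n) / (a + b) := by
      rw [eq_div_iff hab0, mul_comm, ← ascPochhammer_succ_eval_left, ascPochhammer_succ_eval]
    rw [Finset.sum_range_succ, ih]
    simp only [ordinaryHypergeometricCoefficient, hshift, ascPochhammer_succ_eval,
      Nat.factorial_succ, Nat.cast_mul, Nat.cast_add_one]
    field_simp [ascPochhammer_eval_ne_zero hab, habn, Nat.cast_add_one_ne_zero n,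
      Nat.factorial_ne_zero]
    ring

lemma hasSum_ordinaryHypergeometricCoefficient_add_one (ha : ∀ m : ℕ, a ≠ -m)
    (hb : ∀ m : ℕ, b ≠ -m) (hab : ∀ m : ℕ, a + b ≠ -m) :
    HasSum (ordinaryHypergeometricCoefficient a b (a + b + 1))
      (Gamma (a + b + 1) / (Gamma (a + 1) * Gamma (b + 1))) := by
  have ha0 : a ≠ 0 := by simpa using ha 0
  have hb0 : b ≠ 0 := by simpa using hb 0
  have hab0 : a + b ≠ 0 := by simpa using hab 0
  have hsum : Summable fun n ↦ ‖ordinaryHypergeometricCoefficient a b (a + b + 1) n‖ :=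
    summable_norm_ordinaryHypergeometricCoefficient ha hb
      (ne_neg_natCast_of_eq_add_natCast hab 1 (by simp)) (by simp only [sub_re, add_re, one_re]; linarith)
  rw [hsum.of_norm.hasSum_iff_tendsto_nat]
  simp only [sum_range_ordinaryHypergeometricCoefficient_add_one ha0 hb0 hab]
  convert (tendsto_natCast_mul_ordinaryHypergeometricCoefficient ha hb hab).const_mul
    ((a + b) / (a * b)) using 2
  rw [Gamma_add_one _ ha0, Gamma_add_one _ hb0, Gamma_add_one _ hab0]
  field_simp [Gamma_ne_zero ha, Gamma_ne_zero hb]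

lemma ordinaryHypergeometricCoefficient_add_one_succ_sub (hc : ∀ m : ℕ, c ≠ -m) (k : ℕ) :
    ordinaryHypergeometricCoefficient (a + 1) b c (k + 1) -
        ordinaryHypergeometricCoefficient a b c (k + 1) =
      b / c * ordinaryHypergeometricCoefficient (a + 1) (b + 1) (c + 1) k := by
  simp only [ordinaryHypergeometricCoefficient]
  rw [ascPochhammer_succ_eval k (a + 1), ascPochhammer_succ_eval_left k a,
    ascPochhammer_succ_eval_left k b, ascPochhammer_succ_eval_left k c, Nat.factorial_succ,
    Nat.cast_mul, Nat.cast_add_one]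
  have hc1 : ∀ m : ℕ, c + 1 ≠ -m := ne_neg_natCast_of_eq_add_natCast hc 1 (by simp)
  field_simp [ascPochhammer_eval_ne_zero hc1, (by simpa using hc 0 : c ≠ 0),
    Nat.cast_add_one_ne_zero k, Nat.factorial_ne_zero]
  ring

lemma HasSum.ordinaryHypergeometricCoefficient_add_one_sub {s : ℂ} (hc : ∀ m : ℕ, c ≠ -m)
    (h : HasSum (ordinaryHypergeometricCoefficient (a + 1) (b + 1) (c + 1)) s) :
    HasSum (fun k ↦ ordinaryHypergeometricCoefficient (a + 1) b c k -
      ordinaryHypergeometricCoefficient a b c k) (b / c * s) := by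
  have h0 : ordinaryHypergeometricCoefficient (a + 1) b c 0 -
      ordinaryHypergeometricCoefficient a b c 0 = 0 := by
    simp only [ordinaryHypergeometricCoefficient]; simp
  rw [← hasSum_nat_add_iff' 1, Finset.sum_range_one, h0, sub_zero]
  simpa only [ordinaryHypergeometricCoefficient_add_one_succ_sub hc] using h.mul_left (b / c)

theorem hasSum_ordinaryHypergeometricCoefficient_add_natCast_add_one (N : ℕ)
    (ha : ∀ m : ℕ, a ≠ -m) (hb : ∀ m : ℕ, b ≠ -m) (hab : ∀ m : ℕ, a + b ≠ -m) :
    HasSum (ordinaryHypergeometricCoefficient a b (a + b + N + 1))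
      (Gamma (a + b + N + 1) * N ! / (Gamma (a + N + 1) * Gamma (b + N + 1))) := by
  induction N generalizing a b with
  | zero => simpa using hasSum_ordinaryHypergeometricCoefficient_add_one ha hb hab
  | succ N ih =>
    have ha1 : ∀ m : ℕ, a + 1 ≠ -m := ne_neg_natCast_of_eq_add_natCast ha 1 (by simp)
    have hb1 : ∀ m : ℕ, b + 1 ≠ -m := ne_neg_natCast_of_eq_add_natCast hb 1 (by simp)
    have h₁ := ih ha1 hb (ne_neg_natCast_of_eq_add_natCast hab 1 (by push_cast; ring))
    have h₂ := ih ha1 hb1 (ne_neg_natCast_of_eq_add_natCast hab 2 (by push_cast; ring))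
    set c := a + 1 + b + N + 1
    have hc : ∀ m : ℕ, c ≠ -m := ne_neg_natCast_of_eq_add_natCast hab (N + 2) (by push_cast; ring)
    have hbN : ∀ m : ℕ, b + N + 1 ≠ -m :=
      ne_neg_natCast_of_eq_add_natCast hb (N + 1) (by push_cast; ring)
    have haN : ∀ m : ℕ, a + 1 + N + 1 ≠ -m :=
      ne_neg_natCast_of_eq_add_natCast ha (N + 2) (by push_cast; ring)
    have hc0 : c ≠ 0 := by simpa using hc 0
    have hbN0 : b + N + 1 ≠ 0 := by simpa using hbN 0
    rw [show a + 1 + (b + 1) + N + 1 = c + 1 by ring, Gamma_add_one c hc0,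
      show b + 1 + N + 1 = b + N + 1 + 1 by ring, Gamma_add_one _ hbN0] at h₂
    have key := h₁.sub (h₂.ordinaryHypergeometricCoefficient_add_one_sub hc)
    simp only [sub_sub_cancel] at key
    rw [Nat.factorial_succ, Nat.cast_mul, Nat.cast_add_one, show a + b + (N + 1) + 1 = c by ring,
      show a + (N + 1) + 1 = a + 1 + N + 1 by ring, show b + (N + 1) + 1 = b + N + 1 + 1 by ring,
      Gamma_add_one _ hbN0]
    refine (congrArg (HasSum (ordinaryHypergeometricCoefficient a b c)) ?_).mp key
    field_simp [Gamma_ne_zero haN, Gamma_ne_zero hbN]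
    ring

end ordinaryHypergeometricCoefficient

def residueSeriesTerm (z a b : ℂ) (k : ℕ) : ℂ :=
  (-1) ^ k / k ! * Gamma (z - k) * Gamma (a + k) * Gamma (b + k)

section residueSeriesTerm

variable {z a b : ℂ} {N : ℕ}

lemma residueSeriesTerm_eq (hz : ∀ n : ℤ, z ≠ n) (ha : ∀ m : ℕ, a ≠ -m) (hb : ∀ m : ℕ, b ≠ -m)
    (k : ℕ) :
    residueSeriesTerm z a b k =
      Gamma z * Gamma a * Gamma b * ordinaryHypergeometricCoefficient a b (1 - z) k := by
  have hzk : ∀ m : ℕ, z - k ≠ -m := fun m h ↦ hz (k - m) (by push_cast; linear_combination h)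
  have h1z : ∀ m : ℕ, 1 - z ≠ -m := fun m h ↦ hz (m + 1) (by push_cast; linear_combination -h)
  rw [residueSeriesTerm, Gamma_add_natCast ha, Gamma_add_natCast hb,
    Gamma_eq_Gamma_sub_natCast_mul hzk]
  field_simp [ascPochhammer_eval_ne_zero h1z, Nat.factorial_ne_zero]

lemma summable_norm_residueSeriesTerm (hz : ∀ n : ℤ, z ≠ n) (ha : ∀ m : ℕ, a ≠ -m)
    (hb : ∀ m : ℕ, b ≠ -m) (habz : a + b + z + N = 0) :
    Summable fun k ↦ ‖residueSeriesTerm z a b k‖ := by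
  have h1z : ∀ m : ℕ, 1 - z ≠ -m := fun m h ↦ hz (m + 1) (by push_cast; linear_combination -h)
  have hre : 0 < (1 - z - a - b).re := by
    rw [show 1 - z - a - b = N + 1 by linear_combination -habz]
    simp only [add_re, natCast_re, one_re]
    positivity
  simp only [residueSeriesTerm_eq hz ha hb]
  exact ((summable_norm_ordinaryHypergeometricCoefficient ha hb h1z hre).mul_left
    ‖Gamma z * Gamma a * Gamma b‖).congr fun k ↦ (norm_mul _ _).symm

lemma hasSum_residueSeriesTerm (hz : ∀ n : ℤ, z ≠ n) (ha : ∀ m : ℕ, a ≠ -m)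
    (hb : ∀ m : ℕ, b ≠ -m) (habz : a + b + z + N = 0) :
    HasSum (residueSeriesTerm z a b) (N ! * (Gamma z * Gamma (1 - z)) /
      ((ascPochhammer ℂ (N + 1)).eval a * (ascPochhammer ℂ (N + 1)).eval b)) := by
  have hab : ∀ m : ℕ, a + b ≠ -m := fun m h ↦ hz (m - N) (by push_cast; linear_combination habz - h)
  have hGauss := hasSum_ordinaryHypergeometricCoefficient_add_natCast_add_one N ha hb hab
  rw [show a + b + N + 1 = 1 - z by linear_combination habz] at hGauss
  have hval : Gamma z * Gamma a * Gamma b *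
      (Gamma (1 - z) * N ! / (Gamma (a + N + 1) * Gamma (b + N + 1))) =
      N ! * (Gamma z * Gamma (1 - z)) /
        ((ascPochhammer ℂ (N + 1)).eval a * (ascPochhammer ℂ (N + 1)).eval b) := by
    rw [add_assoc a, add_assoc b, ← Nat.cast_add_one, Gamma_add_natCast ha, Gamma_add_natCast hb]
    field_simp [Gamma_ne_zero ha, Gamma_ne_zero hb]
  rw [← hval, funext (residueSeriesTerm_eq hz ha hb)]
  exact hGauss.mul_left _

theorem residueSeriesTerm_cancel (hz : ∀ n : ℤ, z ≠ n) (ha : ∀ n : ℤ, a ≠ n)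
    (hb : ∀ n : ℤ, b ≠ n) (habz : a + b + z + N = 0) :
    (Summable fun k ↦ ‖residueSeriesTerm z a b k‖) ∧
      (Summable fun k ↦ ‖residueSeriesTerm (-z) (-b - N) (-a - N) k‖) ∧
      HasSum (fun k ↦ residueSeriesTerm z a b k + residueSeriesTerm (-z) (-b - N) (-a - N) k) 0 := by
  have ha' : ∀ m : ℕ, a ≠ -m := fun m ↦ by exact_mod_cast ha (-m)
  have hb' : ∀ m : ℕ, b ≠ -m := fun m ↦ by exact_mod_cast hb (-m)
  have hz' : ∀ n : ℤ, -z ≠ n := fun n h ↦ hz (-n) (by push_cast; linear_combination -h)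
  have haN : ∀ m : ℕ, -a - N ≠ -m := fun m h ↦ ha (m - N) (by push_cast; linear_combination -h)
  have hbN : ∀ m : ℕ, -b - N ≠ -m := fun m h ↦ hb (m - N) (by push_cast; linear_combination -h)
  have habz' : -b - N + (-a - N) + -z + N = 0 := by linear_combination -habz
  refine ⟨summable_norm_residueSeriesTerm hz ha' hb' habz,
    summable_norm_residueSeriesTerm hz' hbN haN habz', ?_⟩
  have hsq : ((-1 : ℂ) ^ (N + 1)) ^ 2 = 1 := by rw [← pow_mul, pow_mul', neg_one_sq, one_pow]
  have hsum := (hasSum_residueSeriesTerm hz ha' hb' habz).add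
    (hasSum_residueSeriesTerm hz' hbN haN habz')
  rwa [ascPochhammer_eval_neg_sub_natCast, ascPochhammer_eval_neg_sub_natCast,
    show (-1) ^ (N + 1) * (ascPochhammer ℂ (N + 1)).eval b *
      ((-1) ^ (N + 1) * (ascPochhammer ℂ (N + 1)).eval a) =
      (ascPochhammer ℂ (N + 1)).eval a * (ascPochhammer ℂ (N + 1)).eval b by
        linear_combination (ascPochhammer ℂ (N + 1)).eval a * (ascPochhammer ℂ (N + 1)).eval b * hsq,
    ← add_div, ← mul_add, sub_neg_eq_add, Gamma_mul_Gamma_one_sub_add_Gamma_neg_mul_Gamma_one_add,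
    mul_zero, zero_div] at hsum

end residueSeriesTerm

/-- the key Gamma-series cancellation underlying Lemma 4.2. -/
theorem gamma_series_cancellation (μ1 μ2 : ℂ)
    (h1 : ∀ n : ℤ, μ1 ≠ (n : ℂ))
    (h2 : ∀ n : ℤ, (μ1 + μ2) / 2 ≠ (n : ℂ))
    (h3 : ∀ n : ℤ, (μ1 - μ2) / 2 ≠ (n : ℂ))
    (k2 k3 k4 : ℕ) :
    (Summable fun k1 : ℕ => ‖termCa1 μ1 μ2 k2 k3 k4 k1‖) ∧
    (Summable fun k1 : ℕ => ‖termCa2 μ1 μ2 k2 k3 k4 k1‖) ∧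
    (∑' k1 : ℕ, (termCa1 μ1 μ2 k2 k3 k4 k1 + termCa2 μ1 μ2 k2 k3 k4 k1)) = 0 := by
  set a : ℂ := (-μ1 - μ2) / 2 + k2 - k3
  set b : ℂ := (-μ1 + μ2) / 2 - k2 - k4
  have ha : ∀ n : ℤ, a ≠ n := fun n h ↦ h2 (k2 - k3 - n) (by push_cast; linear_combination -h)
  have hb : ∀ n : ℤ, b ≠ n := fun n h ↦ h3 (-k2 - k4 - n) (by push_cast; linear_combination -h)
  have hCa1 : termCa1 μ1 μ2 k2 k3 k4 = residueSeriesTerm μ1 a b := by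
    funext k
    simp only [termCa1, residueSeriesTerm, a, b]
    ring_nf
  have hCa2 : termCa2 μ1 μ2 k2 k3 k4 =
      residueSeriesTerm (-μ1) (-b - ↑(k3 + k4)) (-a - ↑(k3 + k4)) := by
    funext k
    simp only [termCa2, residueSeriesTerm, a, b]
    push_cast
    ring_nf
  obtain ⟨hs₁, hs₂, hsum⟩ := residueSeriesTerm_cancel h1 ha hb (N := k3 + k4) (by push_cast; ring)
  rw [hCa1, hCa2]
  exact ⟨hs₁, hs₂, hsum.tsum_eq⟩

end
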